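/- arXiv:1402.0402 — 2 statements merged into one kernel-verified Lean document; each statement's English description precedes it below -/
import Mathlib

section
/- Let G be connected and let S be a minimum balanced separator of G. Then for every contraction order π, the contraction hierarchy G*π contains a clique on at least |S| vertices. -/
open SimpleGraph
open scoped ENNReal

variable {V : Type*}

/-- One step of vertex contraction: remove `v` from the current graph and add an edge
between every pair of its current neighbors. -/
def chStep (H : SimpleGraph V) (v : V) : SimpleGraph V where
  Adj a b := a ≠ b ∧ a ≠ v ∧ b ≠ v ∧ (H.Adj a b ∨ (H.Adj v a ∧ H.Adj v b))
  symm := by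
    constructor
    rintro a b ⟨h1, h2, h3, h4⟩
    refine ⟨h1.symm, h3, h2, ?_⟩
    rcases h4 with h | ⟨ha, hb⟩
    · exact Or.inl h.symm
    · exact Or.inr ⟨hb, ha⟩
  loopless := ⟨fun a h => h.1 rfl⟩

/-- All edges ever present while contracting the vertices of the list in order:
the edges of the initial graph together with all added shortcuts. -/
def chList : SimpleGraph V → List V → SimpleGraph V
  | H, [] => H
  | H, v :: l => H ⊔ chList (chStep H v) l

/-- The rank of a vertex with respect to the contraction order `π`. -/
def rk {n : ℕ} (π : Fin n ≃ V) (v : V) : ℕ := (π.symm v : ℕ)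

/-- The contraction hierarchy `G*π`: contract `π 0, π 1, …` in this order and collect
all original edges and all added shortcuts. -/
def chGraph {n : ℕ} (G : SimpleGraph V) (π : Fin n ≃ V) : SimpleGraph V :=
  chList G ((List.finRange n).map ⇑π)

/-- A list of vertices is up-down w.r.t. a rank function: ranks strictly increase
along a prefix and strictly decrease along the remaining suffix, the two parts
meeting at the maximum-rank vertex. -/
def IsUpDown (r : V → ℕ) (l : List V) : Prop :=
  ∃ l₁ x l₂, l = l₁ ++ x :: l₂ ∧
    List.Chain' (fun a b => r a < r b) (l₁ ++ [x]) ∧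
    List.Chain' (fun a b => r b < r a) (x :: l₂)

/-- Reachability in the upward directed graph `G^∧π` (edges of `G*π` directed from
lower to higher rank): the vertex set of the search space `SS v`. -/
def UpReach {n : ℕ} (G : SimpleGraph V) (π : Fin n ≃ V) (v u : V) : Prop :=
  Relation.ReflTransGen (fun a b => (chGraph G π).Adj a b ∧ rk π a < rk π b) v u

/-- Length of a walk: the sum of the weights of its edges. -/
noncomputable def wlen {H : SimpleGraph V} (m : V → V → ℝ≥0∞) {s t : V}
    (p : H.Walk s t) : ℝ≥0∞ :=
  (p.darts.map (fun d => m d.toProd.1 d.toProd.2)).sum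

/-- Shortest path distance in a graph `H` under edge weights `m`. -/
noncomputable def gdist (H : SimpleGraph V) (m : V → V → ℝ≥0∞) (s t : V) : ℝ≥0∞ :=
  ⨅ (p : H.Walk s t), wlen m p

/-- Minimum length of an up-down `s`-`t` path in `G*π`. -/
noncomputable def updist {n : ℕ} (G : SimpleGraph V) (π : Fin n ≃ V)
    (m : V → V → ℝ≥0∞) (s t : V) : ℝ≥0∞ :=
  ⨅ (p : (chGraph G π).Walk s t) (_ : IsUpDown (rk π) p.support), wlen m p

/-- Minimum length of a strictly rank-increasing `u`-`v` path in `G*π`. -/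
noncomputable def upOnlyDist {n : ℕ} (G : SimpleGraph V) (π : Fin n ≃ V)
    (m : V → V → ℝ≥0∞) (u v : V) : ℝ≥0∞ :=
  ⨅ (p : (chGraph G π).Walk u v)
    (_ : List.Chain' (fun a b => rk π a < rk π b) p.support), wlen m p

/-- `S` is a balanced separator of the subgraph of `G` induced by `U`. -/
def IsBalancedSepOn [DecidableEq V] (G : SimpleGraph V) (U S : Finset V) : Prop :=
  S ⊆ U ∧ ∃ A B : Finset V, A ⊆ U ∧ B ⊆ U ∧
    Disjoint A B ∧ Disjoint A S ∧ Disjoint B S ∧ A ∪ B ∪ S = U ∧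
    (∀ a ∈ A, ∀ b ∈ B, ¬ G.Adj a b) ∧
    3 * A.card ≤ 2 * U.card ∧ 3 * B.card ≤ 2 * U.card

/-- Nested dissection orders (as lists, earliest contracted first, separator last)
of induced subgraphs of `G`, in which the separator chosen at every recursion step on
a `k`-vertex subgraph is balanced and has cardinality at most `c * k ^ α`. -/
inductive IsNDOrder [DecidableEq V] (G : SimpleGraph V) (c α : ℝ) : Finset V → List V → Prop
  | empty : IsNDOrder G c α ∅ []
  | step {U S A B : Finset V} {lA lB lS : List V} :
      Disjoint A B → Disjoint A S → Disjoint B S → A ∪ B ∪ S = U →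
      (∀ a ∈ A, ∀ b ∈ B, ¬ G.Adj a b) →
      3 * A.card ≤ 2 * U.card → 3 * B.card ≤ 2 * U.card →
      ((S.card : ℝ) ≤ c * (U.card : ℝ) ^ α) →
      lS.Nodup → lS.toFinset = S →
      IsNDOrder G c α A lA → IsNDOrder G c α B lB →
      IsNDOrder G c α U (lA ++ lB ++ lS)

/-- Number of vertices of the search space `SS v` in `G^∧π`. -/
noncomputable def nVertsSS {n : ℕ} (G : SimpleGraph V) (π : Fin n ≃ V) (v : V) : ℕ :=
  {u | UpReach G π v u}.ncard

/-- Number of arcs of the search space `SS v` in `G^∧π`: arcs of `G^∧π` with both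
endpoints reachable from `v`. -/
noncomputable def nArcsSS {n : ℕ} (G : SimpleGraph V) (π : Fin n ≃ V) (v : V) : ℕ :=
  {q : V × V | (chGraph G π).Adj q.1 q.2 ∧ rk π q.1 < rk π q.2 ∧
    UpReach G π v q.1 ∧ UpReach G π v q.2}.ncard

/-- The rank sequence of a walk: for each edge, the minimum of the ranks of its
endpoints, sorted in decreasing order. -/
def rankSeq {H : SimpleGraph V} (r : V → ℕ) {s t : V} (p : H.Walk s t) : List ℕ :=
  (p.darts.map (fun d => min (r d.toProd.1) (r d.toProd.2))).insertionSort (· ≥ ·)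

/-- Directed length of a walk in `G*π` under a pair of directed metrics `(mu, md)`:
each edge traversed from lower rank to higher rank costs its upward weight,
each edge traversed from higher rank to lower rank costs its downward weight. -/
noncomputable def dlen {H : SimpleGraph V} (r : V → ℕ) (mu md : V → V → ℝ≥0∞)
    {s t : V} (p : H.Walk s t) : ℝ≥0∞ :=
  (p.darts.map (fun d =>
    if r d.toProd.1 < r d.toProd.2 then mu d.toProd.1 d.toProd.2
    else md d.toProd.2 d.toProd.1)).sum

/-- Length of a directed walk `s :: l` under arc weights `wD`. -/
noncomputable def dWalkLen (wD : V → V → ℝ≥0∞) : V → List V → ℝ≥0∞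
  | _, [] => 0
  | s, x :: l => wD s x + dWalkLen wD x l

/-- Shortest directed path distance in the directed graph `D` under arc weights `wD`. -/
noncomputable def ddist (D : V → V → Prop) (wD : V → V → ℝ≥0∞) (s t : V) : ℝ≥0∞ :=
  ⨅ (l : List V) (_ : List.Chain D s l ∧ l.getLastD s = t), dWalkLen wD s l


/-!
By the fill-path lemma, `a` and `b` are adjacent in `G*π` iff `G` joins them by a walk whose
interior vertices all precede both of them in `π`. Let `L(v)` be the set of vertices reachable
from `v` through vertices preceding `v`, and pick `v` of least rank with `|L(v)| > n/3` (the last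
vertex has `L = V` since `G` is connected). The closed upper neighbourhood `C` of `v` in `G*π` is a
clique, and every edge of `G` leaving `L(v)` ends in `C`. Each component of `G[L(v) ∖ {v}]` lies in
`L(u)` for its last vertex `u`, so by minimality of `v` it has at most `n/3` vertices; a greedy
union of components is one side of a balanced separator `C`, whence `|S| ≤ |C|`.
-/

namespace SimpleGraph

variable (G : SimpleGraph V) {X Y : Set V} {a b c x : V}

def ReachVia (X : Set V) : V → V → Prop :=
  Relation.ReflTransGen fun u w => G.Adj u w ∧ w ∈ X

def JoinedVia (X : Set V) (a b : V) : Prop :=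
  ∃ c, G.ReachVia X a c ∧ G.Adj c b

variable {G}

theorem ReachVia.mem (h : G.ReachVia X a b) (ha : a ∈ X) : b ∈ X := by
  rcases h.cases_tail with rfl | ⟨_, _, h⟩
  exacts [ha, h.2]

theorem ReachVia.symm (h : G.ReachVia X a b) (ha : a ∈ X) : G.ReachVia X b a := by
  induction h with
  | refl => exact .refl
  | tail hac hcd ih => exact .head ⟨hcd.1.symm, ReachVia.mem hac ha⟩ ih

theorem JoinedVia.of_adj (h : G.Adj a b) : G.JoinedVia X a b := ⟨a, .refl, h⟩

theorem JoinedVia.mono (hXY : X ⊆ Y) : G.JoinedVia X a b → G.JoinedVia Y a b :=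
  fun ⟨c, hac, hcb⟩ => ⟨c, Relation.ReflTransGen.mono (fun _ _ h => ⟨h.1, hXY h.2⟩) _ _ hac, hcb⟩

theorem JoinedVia.symm : G.JoinedVia X a b → G.JoinedVia X b a := by
  rintro ⟨c, hac, hcb⟩
  induction hac generalizing b with
  | refl => exact .of_adj hcb.symm
  | tail _ hdc ih =>
    obtain ⟨e, hce, hea⟩ := ih hdc.1
    exact ⟨e, .head ⟨hcb.symm, hdc.2⟩ hce, hea⟩

theorem JoinedVia.trans (hac : G.JoinedVia X a c) (hc : c ∈ X) (hcb : G.JoinedVia X c b) :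
    G.JoinedVia X a b := by
  obtain ⟨d, had, hdc⟩ := hac
  obtain ⟨e, hce, heb⟩ := hcb
  exact ⟨e, (had.tail ⟨hdc, hc⟩).trans hce, heb⟩

theorem joinedVia_empty : G.JoinedVia ∅ a b ↔ G.Adj a b := by
  refine ⟨fun ⟨c, hac, hcb⟩ => ?_, .of_adj⟩
  rcases hac.cases_tail with rfl | ⟨_, _, _, h⟩
  exacts [hcb, h.elim]

/-- A walk through `insert x X` either avoids `x` or splits at its first and last visit to `x`. -/
theorem JoinedVia.of_insert (h : G.JoinedVia (insert x X) a b) :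
    G.JoinedVia X a b ∨ G.JoinedVia X a x ∧ G.JoinedVia X x b := by
  obtain ⟨c, hac, hcb⟩ := h
  have key : G.ReachVia X a c ∨ G.JoinedVia X a x ∧ G.ReachVia X x c := by
    clear hcb
    induction hac with
    | refl => exact .inl .refl
    | @tail d e _ hde ih =>
      rcases hde.2 with rfl | he
      · exact .inr ⟨ih.elim (⟨d, ·, hde.1⟩) (·.1), .refl⟩
      · exact ih.imp (·.tail ⟨hde.1, he⟩) fun h => ⟨h.1, h.2.tail ⟨hde.1, he⟩⟩
  exact key.imp (⟨c, ·, hcb⟩) fun h => ⟨h.1, c, h.2, hcb⟩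

end SimpleGraph

open SimpleGraph

theorem chStep_adj {H : SimpleGraph V} {v a b : V} :
    (chStep H v).Adj a b ↔ a ≠ b ∧ a ≠ v ∧ b ≠ v ∧ (H.Adj a b ∨ H.Adj v a ∧ H.Adj v b) :=
  Iff.rfl

def elimGraph (G : SimpleGraph V) (p : List V) : SimpleGraph V := p.foldl chStep G

theorem elimGraph_adj_iff {G : SimpleGraph V} {a b : V} (p : List V) :
    (elimGraph G p).Adj a b ↔ a ∉ p ∧ b ∉ p ∧ a ≠ b ∧ G.JoinedVia {x | x ∈ p} a b := by
  induction p using List.reverseRecOn generalizing a b with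
  | nil => simpa [elimGraph, joinedVia_empty] using fun h => h.ne
  | append_singleton p x ih =>
    have hins : {y | y ∈ p ++ [x]} = insert x {y | y ∈ p} := by ext; simp [or_comm]
    rw [elimGraph, List.foldl_append, List.foldl_cons, List.foldl_nil, ← elimGraph, chStep_adj,
      ih, ih, ih, hins]
    simp only [List.mem_append, List.mem_singleton, not_or]
    constructor
    · rintro ⟨hab, hax, hbx, ⟨ha, hb, -, h⟩ | ⟨⟨hx, ha, -, hxa⟩, ⟨-, hb, -, hxb⟩⟩⟩
      · exact ⟨⟨ha, hax⟩, ⟨hb, hbx⟩, hab, h.mono (Set.subset_insert _ _)⟩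
      · refine ⟨⟨ha, hax⟩, ⟨hb, hbx⟩, hab, ?_⟩
        exact (hxa.symm.mono (Set.subset_insert _ _)).trans (Set.mem_insert _ _)
          (hxb.mono (Set.subset_insert _ _))
    · rintro ⟨⟨ha, hax⟩, ⟨hb, hbx⟩, hab, h⟩
      refine ⟨hab, hax, hbx, ?_⟩
      by_cases hx : x ∈ p
      · rw [Set.insert_eq_of_mem (s := {y | y ∈ p}) hx] at h
        exact .inl ⟨ha, hb, hab, h⟩
      rcases h.of_insert with h | ⟨hax', hxb⟩
      · exact .inl ⟨ha, hb, hab, h⟩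
      · exact .inr ⟨⟨hx, ha, Ne.symm hax, hax'.symm⟩, ⟨hx, hb, Ne.symm hbx, hxb⟩⟩

theorem chList_adj_iff {G : SimpleGraph V} {a b : V} (l : List V) :
    (chList G l).Adj a b ↔ ∃ k, (elimGraph G (l.take k)).Adj a b := by
  induction l generalizing G with
  | nil => simp [chList, elimGraph]
  | cons x l ih =>
    simp only [chList, sup_adj, ih]
    constructor
    · rintro (h | ⟨k, h⟩)
      exacts [⟨0, h⟩, ⟨k + 1, h⟩]
    · rintro ⟨_ | k, h⟩
      exacts [.inl h, .inr ⟨k, h⟩]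

theorem rk_injective {n : ℕ} (π : Fin n ≃ V) : Function.Injective (rk π) :=
  fun _ _ h => π.symm.injective (Fin.ext h)

theorem mem_take_map_finRange_iff {n k : ℕ} (π : Fin n ≃ V) {y : V} :
    y ∈ ((List.finRange n).map π).take k ↔ rk π y < k := by
  rw [← List.map_take, List.mem_map]
  constructor
  · rintro ⟨i, hi, rfl⟩
    obtain ⟨j, hj, rfl⟩ := List.mem_take_iff_getElem.1 hi
    simp only [List.length_finRange, lt_min_iff] at hj
    simpa [rk] using hj.1
  · intro hy
    refine ⟨π.symm y, List.mem_take_iff_getElem.2 ⟨rk π y, ?_, ?_⟩, π.apply_symm_apply y⟩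
    · simpa using ⟨hy, (π.symm y).isLt⟩
    · simp [rk]

/-- The fill-path lemma of Rose, Tarjan and Lueker. -/
theorem chGraph_adj_iff {n : ℕ} {G : SimpleGraph V} {π : Fin n ≃ V} {a b : V} :
    (chGraph G π).Adj a b ↔
      a ≠ b ∧ G.JoinedVia {w | rk π w < min (rk π a) (rk π b)} a b := by
  simp only [chGraph, chList_adj_iff, elimGraph_adj_iff, mem_take_map_finRange_iff, not_lt]
  constructor
  · rintro ⟨k, hak, hbk, hab, h⟩
    exact ⟨hab, h.mono fun w hw => by simp only [Set.mem_ofPred_eq, lt_min_iff] at hw ⊢; omega⟩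
  · rintro ⟨hab, h⟩
    exact ⟨_, min_le_left _ _, min_le_right _ _, hab, h⟩

noncomputable def upperClosedNbhd [DecidableEq V] [Fintype V] {n : ℕ} (G : SimpleGraph V)
    (π : Fin n ≃ V) (v : V) : Finset V :=
  open Classical in
  insert v (Finset.univ.filter fun w => (chGraph G π).Adj v w ∧ rk π v < rk π w)

theorem self_mem_upperClosedNbhd [DecidableEq V] [Fintype V] {n : ℕ} {G : SimpleGraph V}
    {π : Fin n ≃ V} {v : V} : v ∈ upperClosedNbhd G π v :=
  Finset.mem_insert_self _ _

theorem isClique_upperClosedNbhd [DecidableEq V] [Fintype V] {n : ℕ} (G : SimpleGraph V)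
    (π : Fin n ≃ V) (v : V) : (chGraph G π).IsClique (upperClosedNbhd G π v : Set V) := by
  have key : ∀ a, (chGraph G π).Adj v a → rk π v < rk π a →
      G.JoinedVia {w | rk π w < rk π v} v a := fun a ha hva => by
    simpa [min_eq_left hva.le] using (chGraph_adj_iff.1 ha).2
  intro a ha b hb hab
  simp only [upperClosedNbhd, Finset.coe_insert, Finset.coe_filter, Set.mem_insert_iff,
    Finset.mem_univ, true_and, Set.mem_ofPred_eq] at ha hb
  rcases ha with rfl | ⟨hva, hrva⟩ <;> rcases hb with rfl | ⟨hvb, hrvb⟩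
  · exact absurd rfl hab
  · exact hvb
  · exact hva.symm
  have hsub : {w | rk π w < rk π v} ⊆ {w | rk π w < min (rk π a) (rk π b)} := fun w hw => by
    simp only [Set.mem_ofPred_eq, lt_min_iff] at hw ⊢; omega
  refine chGraph_adj_iff.2 ⟨hab, ((key a hva hrva).symm.mono hsub).trans ?_
    ((key b hvb hrvb).mono hsub)⟩
  simp only [Set.mem_ofPred_eq, lt_min_iff]; omega

section LowerComponent

variable [Fintype V] {n : ℕ} {G : SimpleGraph V} {π : Fin n ≃ V} {a b u v w : V}

variable (G π) in
noncomputable def lowerComponent (v : V) : Finset V :=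
  open Classical in Finset.univ.filter (G.ReachVia {u | rk π u < rk π v} v)

theorem mem_lowerComponent :
    w ∈ lowerComponent G π v ↔ G.ReachVia {u | rk π u < rk π v} v w := by
  simp [lowerComponent]

theorem self_mem_lowerComponent : v ∈ lowerComponent G π v := mem_lowerComponent.2 .refl

theorem rk_lt_of_mem_lowerComponent (h : w ∈ lowerComponent G π v) (hwv : w ≠ v) :
    rk π w < rk π v := by
  rw [mem_lowerComponent] at h
  rcases h.cases_tail with rfl | ⟨_, _, h⟩
  exacts [absurd rfl hwv, h.2]

theorem mem_lowerComponent_of_adj (ha : a ∈ lowerComponent G π v) (hab : G.Adj a b)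
    (hb : rk π b ≤ rk π v) : b ∈ lowerComponent G π v := by
  rcases hb.eq_or_lt with h | h
  · rw [rk_injective π h]
    exact self_mem_lowerComponent
  · rw [mem_lowerComponent] at ha ⊢
    exact ha.tail ⟨hab, h⟩

theorem lowerComponent_eq_univ (hG : G.Connected) (hv : ∀ w, rk π w ≤ rk π v) :
    lowerComponent G π v = Finset.univ := by
  refine Finset.eq_univ_of_forall fun w => ?_
  induction (reachable_iff_reflTransGen v w).1 (hG v w) with
  | refl => exact self_mem_lowerComponent
  | tail _ h ih => exact mem_lowerComponent_of_adj ih h (hv _)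

theorem mem_lowerComponent_of_reachVia {W : Set V}
    (hmax : ∀ w, G.ReachVia W u w → rk π w ≤ rk π u) (h : G.ReachVia W u w) :
    w ∈ lowerComponent G π u := by
  induction h with
  | refl => exact self_mem_lowerComponent
  | tail hud hde ih => exact mem_lowerComponent_of_adj ih hde.1 (hmax _ (hud.tail hde))

theorem mem_upperClosedNbhd_of_adj [DecidableEq V] (ha : a ∈ lowerComponent G π v)
    (hab : G.Adj a b) (hb : b ∉ lowerComponent G π v) : b ∈ upperClosedNbhd G π v := by
  have hvb : rk π v < rk π b := not_le.1 fun h => hb (mem_lowerComponent_of_adj ha hab h)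
  have hadj : (chGraph G π).Adj v b := by
    refine chGraph_adj_iff.2 ⟨fun h => (h ▸ hvb).false, ?_⟩
    rw [min_eq_left hvb.le]
    exact ⟨a, mem_lowerComponent.1 ha, hab⟩
  simp [upperClosedNbhd, hadj, hvb]

theorem disjoint_erase_lowerComponent_upperClosedNbhd [DecidableEq V] :
    Disjoint ((lowerComponent G π v).erase v) (upperClosedNbhd G π v) := by
  refine Finset.disjoint_left.2 fun a ha haC => ?_
  simp only [upperClosedNbhd, Finset.mem_insert, Finset.mem_filter] at haC
  rcases haC with rfl | ⟨-, -, h⟩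
  · exact Finset.notMem_erase a _ ha
  · obtain ⟨hav, ha⟩ := Finset.mem_erase.1 ha
    exact (h.trans (rk_lt_of_mem_lowerComponent ha hav)).false

variable (G π) in
theorem exists_minimal_large_lowerComponent (hG : G.Connected) :
    ∃ v, Fintype.card V < 3 * (lowerComponent G π v).card ∧
      ∀ u, rk π u < rk π v → 3 * (lowerComponent G π u).card ≤ Fintype.card V := by
  classical
  have : Nonempty V := hG.nonempty
  obtain ⟨t, -, ht⟩ := Finset.exists_max_image Finset.univ (rk π) Finset.univ_nonempty
  have htop : Fintype.card V < 3 * (lowerComponent G π t).card := by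
    rw [lowerComponent_eq_univ hG fun w => ht w (Finset.mem_univ w), Finset.card_univ]
    have := Fintype.card_pos (α := V)
    omega
  obtain ⟨v, hv, hmin⟩ := Finset.exists_min_image
    (Finset.univ.filter fun v => Fintype.card V < 3 * (lowerComponent G π v).card) (rk π)
    ⟨t, Finset.mem_filter.2 ⟨Finset.mem_univ t, htop⟩⟩
  refine ⟨v, (Finset.mem_filter.1 hv).2, fun u hu => not_lt.1 fun h => ?_⟩
  exact (hmin u (Finset.mem_filter.2 ⟨Finset.mem_univ u, h⟩)).not_gt hu

end LowerComponent

theorem exists_subset_sum_between {ι : Type*} (s : Finset ι) (f : ι → ℕ) {m T : ℕ}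
    (hf : ∀ i ∈ s, f i ≤ m) (hT : T ≤ ∑ i ∈ s, f i) :
    ∃ t ⊆ s, T ≤ ∑ i ∈ t, f i ∧ ∑ i ∈ t, f i ≤ T + m := by
  classical
  induction s using Finset.induction_on with
  | empty => exact ⟨∅, subset_rfl, hT, by simp⟩
  | @insert i s hi ih =>
    by_cases h : T ≤ ∑ j ∈ s, f j
    · obtain ⟨t, hts, ht⟩ := ih (fun j hj => hf j (Finset.mem_insert_of_mem hj)) h
      exact ⟨t, hts.trans (Finset.subset_insert i s), ht⟩
    · refine ⟨insert i s, subset_rfl, hT, ?_⟩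
      rw [Finset.sum_insert hi]
      have := hf i (Finset.mem_insert_self i s)
      omega

/-- The pieces are the fibres of `key` on `W`; one side of the separator is a greedily chosen
union of pieces. -/
theorem isBalancedSepOn_univ_of_pieces [Fintype V] [DecidableEq V] {κ : Type*} [DecidableEq κ]
    (G : SimpleGraph V) (C W : Finset V) (key : V → κ) (hWC : Disjoint W C)
    (hlarge : Fintype.card V ≤ 3 * (W.card + C.card))
    (hsmall : ∀ a ∈ W, 3 * (W.filter (key · = key a)).card ≤ Fintype.card V)
    (hclosed : ∀ a ∈ W, ∀ b, G.Adj a b → b ∈ C ∨ b ∈ W ∧ key b = key a) :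
    IsBalancedSepOn G Finset.univ C := by
  obtain ⟨t, -, hlo, hhi⟩ := exists_subset_sum_between (W.image key)
    (fun k => 3 * (W.filter (key · = k)).card) (T := Fintype.card V - 3 * C.card)
    (fun k hk => by obtain ⟨a, ha, rfl⟩ := Finset.mem_image.1 hk; exact hsmall a ha)
    (by rw [← Finset.mul_sum, ← Finset.card_eq_sum_card_image]; omega)
  set A := W.filter (key · ∈ t)
  have hA : 3 * A.card = ∑ k ∈ t, 3 * (W.filter (key · = k)).card := by
    rw [← Finset.mul_sum, Finset.card_eq_sum_card_fiberwise (s := A) (t := t) (f := key)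
      fun a ha => (Finset.mem_filter.1 ha).2]
    refine congrArg (3 * ·) (Finset.sum_congr rfl fun k hk => congrArg Finset.card ?_)
    ext a
    simp only [A, Finset.mem_filter]
    exact ⟨fun h => ⟨h.1.1, h.2⟩, fun ⟨ha, hak⟩ => ⟨⟨ha, hak ▸ hk⟩, hak⟩⟩
  have hAC : Disjoint A C := hWC.mono_left (Finset.filter_subset _ _)
  have hB : (A ∪ C)ᶜ.card = Fintype.card V - (A.card + C.card) := by
    rw [Finset.card_compl, Finset.card_union_of_disjoint hAC]
  refine ⟨Finset.subset_univ C, A, (A ∪ C)ᶜ, Finset.subset_univ A, Finset.subset_univ _,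
    disjoint_compl_right.mono_left Finset.subset_union_left, hAC,
    disjoint_compl_left.mono_right Finset.subset_union_right, ?_, ?_, ?_, ?_⟩
  · rw [Finset.union_right_comm, Finset.union_compl]
  · intro a ha b hb hab
    rw [Finset.mem_compl, Finset.mem_union, not_or] at hb
    rcases hclosed a (Finset.filter_subset _ _ ha) b hab with hbC | ⟨hbW, hba⟩
    · exact hb.2 hbC
    · exact hb.1 (Finset.mem_filter.2 ⟨hbW, hba ▸ (Finset.mem_filter.1 ha).2⟩)
  · rw [Finset.card_univ]; omega
  · rw [Finset.card_univ, hB]; omega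

theorem isBalancedSepOn_upperClosedNbhd [Fintype V] [DecidableEq V] {n : ℕ}
    (G : SimpleGraph V) (π : Fin n ≃ V) {v : V}
    (hv : Fintype.card V < 3 * (lowerComponent G π v).card)
    (hlight : ∀ u, rk π u < rk π v → 3 * (lowerComponent G π u).card ≤ Fintype.card V) :
    IsBalancedSepOn G Finset.univ (upperClosedNbhd G π v) := by
  classical
  set W := (lowerComponent G π v).erase v
  -- the pieces are the components of `G[W]`, labelled by their vertex sets
  let key a := {w | G.ReachVia W a w}
  have key_eq : ∀ {a b}, G.ReachVia W a b → a ∈ W → key a = key b := fun hab ha =>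
    Set.ext fun _ => ⟨(hab.symm ha).trans, hab.trans⟩
  refine isBalancedSepOn_univ_of_pieces G _ W key
    disjoint_erase_lowerComponent_upperClosedNbhd ?_ ?_ ?_
  · have : W.card + 1 = (lowerComponent G π v).card :=
      Finset.card_erase_add_one self_mem_lowerComponent
    have : 0 < (upperClosedNbhd G π v).card := Finset.card_pos.2 ⟨v, self_mem_upperClosedNbhd⟩
    omega
  · intro a ha
    obtain ⟨u, hu, hmax⟩ := Finset.exists_max_image (W.filter (key · = key a)) (rk π)
      ⟨a, Finset.mem_filter.2 ⟨ha, rfl⟩⟩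
    obtain ⟨huW, hua⟩ := Finset.mem_filter.1 hu
    calc 3 * (W.filter (key · = key a)).card
        ≤ 3 * (lowerComponent G π u).card := by
          refine Nat.mul_le_mul_left 3 (Finset.card_le_card fun w hw => ?_)
          obtain ⟨hwW, hwa⟩ := Finset.mem_filter.1 hw
          have huw : w ∈ key u := by
            rw [hua, ← hwa]
            exact .refl
          refine mem_lowerComponent_of_reachVia (fun z huz => hmax z ?_) huw
          exact Finset.mem_filter.2 ⟨huz.mem huW, by rw [← key_eq huz huW, hua]⟩
      _ ≤ Fintype.card V :=
        hlight u (rk_lt_of_mem_lowerComponent (Finset.mem_of_mem_erase huW)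
          (Finset.ne_of_mem_erase huW))
  · intro a ha b hab
    by_cases hb : b ∈ lowerComponent G π v
    · rcases eq_or_ne b v with rfl | hbv
      · exact .inl self_mem_upperClosedNbhd
      · have hbW : b ∈ W := Finset.mem_erase.2 ⟨hbv, hb⟩
        exact .inr ⟨hbW, (key_eq (.single ⟨hab, hbW⟩) ha).symm⟩
    · exact .inl (mem_upperClosedNbhd_of_adj (Finset.mem_of_mem_erase ha) hab hb)

theorem stmt1_general {V : Type*} [Fintype V] [DecidableEq V] {n : ℕ}
    (G : SimpleGraph V) (hG : G.Connected) (π : Fin n ≃ V)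
    (S : Finset V)
    (hmin : ∀ S' : Finset V, IsBalancedSepOn G Finset.univ S' → S.card ≤ S'.card) :
    ∃ C : Finset V, S.card ≤ C.card ∧ (chGraph G π).IsClique (C : Set V) := by
  obtain ⟨v, hv, hlight⟩ := exists_minimal_large_lowerComponent G π hG
  exact ⟨upperClosedNbhd G π v, hmin _ (isBalancedSepOn_upperClosedNbhd G π hv hlight),
    isClique_upperClosedNbhd G π v⟩

/-- If `S` is a minimum balanced separator of the connected graph `G`,
then for every contraction order `π` the contraction hierarchy `G*π` contains a
clique on at least `|S|` vertices. -/
theorem stmt1 {V : Type*} [Fintype V] [DecidableEq V] {n : ℕ}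
    (G : SimpleGraph V) (hG : G.Connected) (π : Fin n ≃ V)
    (S : Finset V) (hS : IsBalancedSepOn G Finset.univ S)
    (hmin : ∀ S' : Finset V, IsBalancedSepOn G Finset.univ S' → S.card ≤ S'.card) :
    ∃ C : Finset V, S.card ≤ C.card ∧ (chGraph G π).IsClique (C : Set V) :=
  stmt1_general G hG π S hmin
end

section
/- Let α ∈ (0,1) and c > 0 be such that every subgraph of G on k vertices (for every k ≥ 1) has a balanced separator of cardinality at most c·k^α. Let π be a nested dissection order of G in which the separator chosen at every recursion step on a k-vertex subgraph has cardinality at most c·k^α. Then for every vertex v, the search space SS(v) in G^∧π contains at most (c/(1−(2/3)^α))·n^α vertices. -/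
open SimpleGraph
open scoped ENNReal

variable {V : Type*}

/-!
While the vertices of a side `A` of a dissection step are contracted, every edge leaving `A`
ends in a separator `W` of an enclosing step, none of which has been contracted yet; once all
of `A` is contracted no edge touches `A` any more. Hence in `G*π` the side `A` is joined only
to those separators. As separators outrank the sides they separate, the search space of `v`
lies in the union of the separators on the path from the root of the recursion tree down to
`v`, of sizes at most `c n ^ α`, `c ((2/3) n) ^ α`, `c ((2/3)² n) ^ α`, …, a geometric series.
-/

def chRest : SimpleGraph V → List V → SimpleGraph V
  | H, [] => H
  | H, v :: l => chRest (chStep H v) l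

lemma le_chList (H : SimpleGraph V) (l : List V) : H ≤ chList H l := by
  cases l with
  | nil => exact le_rfl
  | cons v l => exact le_sup_left

lemma chList_append (H : SimpleGraph V) (l₁ l₂ : List V) :
    chList H (l₁ ++ l₂) = chList H l₁ ⊔ chList (chRest H l₁) l₂ := by
  induction l₁ generalizing H with
  | nil => exact (sup_of_le_right (le_chList H l₂)).symm
  | cons v l ih =>
    change H ⊔ chList (chStep H v) (l ++ l₂) = (H ⊔ chList (chStep H v) l) ⊔ _
    rw [ih, sup_assoc]
    rfl

def ExitsInto (R : V → V → Prop) (X N : Set V) : Prop :=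
  ∀ ⦃a b⦄, R a b → a ∈ X → b ∈ X ∪ N

def upArc (M : SimpleGraph V) (r : V → ℕ) (a b : V) : Prop := M.Adj a b ∧ r a < r b

namespace ExitsInto

variable {R : V → V → Prop} {X N : Set V}

lemma mem_of_reflTransGen (h : ExitsInto R X ∅) {a b : V} (ha : a ∈ X)
    (hab : Relation.ReflTransGen R a b) : b ∈ X := by
  induction hab with
  | refl => exact ha
  | tail _ hbc ih => simpa using h hbc ih

lemma union {S T W : Set V} (hS : ExitsInto R S W) (hT : ExitsInto R T (S ∪ W)) :
    ExitsInto R (S ∪ T) W := by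
  rintro a b hab (ha | ha)
  · have := hS hab ha
    grind
  · have := hT hab ha
    grind

lemma sides_of_separated {H : SimpleGraph V} {A B S W : Set V}
    (h : ExitsInto H.Adj (A ∪ B ∪ S) W) (hAB : ∀ a ∈ A, ∀ b ∈ B, ¬ H.Adj a b) :
    ExitsInto H.Adj A (S ∪ W) ∧ ExitsInto H.Adj B (S ∪ W) := by
  constructor <;> intro a b hab ha
  · have := h hab (by simp [ha])
    have := hAB a ha b
    grind
  · have := h hab (by simp [ha])
    have := fun hb => hAB b hb a ha hab.symm
    grind

lemma upArc_of_rank_lt {M : SimpleGraph V} {r : V → ℕ} {Y S W : Set V}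
    (h : ExitsInto M.Adj (Y ∪ S) W) (hY : ∀ y ∈ Y, ∀ x ∈ S, r y < r x) :
    ExitsInto (upArc M r) S W := by
  rintro a b ⟨hab, hr⟩ ha
  rcases h hab (Or.inr ha) with (hb | hb) | hb
  · exact absurd (hY b hb a ha) hr.not_gt
  · exact Or.inl hb
  · exact Or.inr hb

variable {H : SimpleGraph V} {v : V}

lemma chStep (h : ExitsInto H.Adj X N) (hv : v ∉ N) : ExitsInto (chStep H v).Adj X N := by
  rintro a b ⟨-, -, -, hab | ⟨hva, hvb⟩⟩ ha
  · exact h hab ha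
  · have hvX : v ∈ X := (h hva.symm ha).resolve_right hv
    exact h hvb hvX

lemma chRest {l : List V} (h : ExitsInto H.Adj X N) (hl : ∀ v ∈ l, v ∉ N) :
    ExitsInto (chRest H l).Adj X N := by
  induction l generalizing H with
  | nil => exact h
  | cons v l ih =>
    exact ih (h.chStep (hl v List.mem_cons_self)) fun w hw => hl w (List.mem_cons_of_mem v hw)

lemma chList {l : List V} (h : ExitsInto H.Adj X N) (hl : ∀ v ∈ l, v ∉ N) :
    ExitsInto (chList H l).Adj X N := by
  induction l generalizing H with
  | nil => exact h
  | cons v l ih =>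
    rintro a b (hab | hab) ha
    · exact h hab ha
    · exact ih (h.chStep (hl v List.mem_cons_self))
        (fun w hw => hl w (List.mem_cons_of_mem v hw)) hab ha

end ExitsInto

lemma chRest_not_adj_of_mem {H : SimpleGraph V} {l : List V} {a : V} (ha : a ∈ l) (b : V) :
    ¬ (chRest H l).Adj a b := by
  induction l generalizing H with
  | nil => cases ha
  | cons v l ih =>
    rcases List.mem_cons.mp ha with rfl | ha
    · -- isolation of `a` is `ExitsInto _ {a} ∅`, which contraction preserves
      have hiso : ExitsInto (chStep H a).Adj {a} ∅ := fun _ _ h hx => (h.2.1 hx).elim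
      intro hab
      have hb : b = a := by simpa using hiso.chRest (by simp) hab rfl
      exact hab.ne hb.symm
    · exact ih ha

lemma ExitsInto.chList_append {H : SimpleGraph V} {X N : Set V} {l₁ l₂ : List V}
    (h : ExitsInto H.Adj X N) (hX : ∀ x ∈ X, x ∈ l₁) (hN : ∀ v ∈ l₁, v ∉ N) :
    ExitsInto (_root_.chList H (l₁ ++ l₂)).Adj X N := by
  rw [_root_.chList_append]
  rintro a b (hab | hab) ha
  · exact h.chList hN hab ha
  · have hrest : ExitsInto (_root_.chRest H l₁).Adj X ∅ :=
      fun a b hab ha => (chRest_not_adj_of_mem (hX a ha) b hab).elim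
    exact Or.inl ((hrest.chList (by simp) hab ha).resolve_right id)

/-- `c / (1 - q)` with `q = (2/3) ^ α` solves `K = c + q K`. -/
lemma mul_rpow_add_le_of_three_mul_le {c α k m : ℝ} (hc : 0 ≤ c) (hα : 0 < α) (hk : 0 ≤ k)
    (hm : 0 ≤ m) (h : 3 * m ≤ 2 * k) :
    c * k ^ α + c / (1 - (2/3 : ℝ) ^ α) * m ^ α ≤ c / (1 - (2/3 : ℝ) ^ α) * k ^ α := by
  set q := (2/3 : ℝ) ^ α
  have hq : 0 < 1 - q := sub_pos.mpr (Real.rpow_lt_one (by norm_num) (by norm_num) hα)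
  have hmk : m ^ α ≤ q * k ^ α := by
    rw [← Real.mul_rpow (by norm_num) hk]
    exact Real.rpow_le_rpow hm (by linarith) hα.le
  calc c * k ^ α + c / (1 - q) * m ^ α ≤ c * k ^ α + c / (1 - q) * (q * k ^ α) := by
        gcongr
    _ = c / (1 - q) * k ^ α := by
        field_simp
        ring

section NestedDissection

variable [DecidableEq V] {G : SimpleGraph V} {c α : ℝ}

lemma card_union_le_of_three_mul_le (hc : 0 ≤ c) (hα : 0 < α) {S T : Finset V} {k m : ℕ}
    (hS : (S.card : ℝ) ≤ c * (k : ℝ) ^ α)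
    (hT : (T.card : ℝ) ≤ c / (1 - (2/3 : ℝ) ^ α) * (m : ℝ) ^ α) (hm : 3 * m ≤ 2 * k) :
    ((S ∪ T).card : ℝ) ≤ c / (1 - (2/3 : ℝ) ^ α) * (k : ℝ) ^ α :=
  calc ((S ∪ T).card : ℝ) ≤ S.card + T.card := by exact_mod_cast Finset.card_union_le S T
    _ ≤ c * (k : ℝ) ^ α + c / (1 - (2/3 : ℝ) ^ α) * (m : ℝ) ^ α := by gcongr
    _ ≤ _ := mul_rpow_add_le_of_three_mul_le hc hα (by positivity) (by positivity)
      (by exact_mod_cast hm)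

lemma IsNDOrder.toFinset_eq {U : Finset V} {l : List V} (h : IsNDOrder G c α U l) :
    l.toFinset = U := by
  induction h with
  | empty => rfl
  | step _ _ _ hU _ _ _ _ _ hS _ _ ihA ihB =>
    rw [← hU, ← ihA, ← ihB, ← hS, List.toFinset_append, List.toFinset_append]

lemma IsNDOrder.mem_iff {U : Finset V} {l : List V} (h : IsNDOrder G c α U l) {x : V} :
    x ∈ l ↔ x ∈ U := by
  rw [← h.toFinset_eq, List.mem_toFinset]

/-- The list `l` of the part `U` sits in the whole contraction order as `L = p ++ l ++ s`,
and `W` collects the separators of the enclosing recursion steps. -/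
lemma IsNDOrder.exists_exitsInto_upArc {r : V → ℕ} {L : List V}
    (hL : L.Pairwise (fun a b => r a < r b)) (hc : 0 ≤ c) (hα : 0 < α)
    {U : Finset V} {l : List V} (hnd : IsNDOrder G c α U l) {p s : List V} {W : Finset V}
    (hpls : L = p ++ l ++ s) (hW : ∀ x ∈ p ++ l, ∀ w ∈ W, r x < r w)
    (hG : ExitsInto G.Adj U W) (v : V) (hv : v ∈ U) :
    ∃ T : Finset V, v ∈ T ∧ ExitsInto (upArc (chList G L) r) T W ∧
      (T.card : ℝ) ≤ c / (1 - (2/3 : ℝ) ^ α) * (U.card : ℝ) ^ α := by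
  induction hnd generalizing p s W v with
  | empty => cases hv
  | @step U S A B lA lB lS _ _ _ hU hsep hA hB hScard _ hlS dA dB ihA ihB =>
    subst hU
    have hL' : (p ++ lA ++ lB ++ lS ++ s).Pairwise (fun a b => r a < r b) := by
      simpa only [hpls, List.append_assoc] using hL
    have hltS : ∀ x ∈ p ++ lA ++ lB, ∀ y ∈ S, r x < r y := fun x hx y hy =>
      (List.pairwise_append.1 hL').1.rel_of_mem_append hx (List.mem_toFinset.1 (hlS.symm ▸ hy))
    have hlt : ∀ x ∈ p ++ lA ++ lB, ∀ w ∈ S ∪ W, r x < r w := by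
      intro x hx w hw
      rcases Finset.mem_union.1 hw with hw | hw
      · exact hltS x hx w hw
      · exact hW x (by simp only [List.mem_append] at hx ⊢; tauto) w hw
    have hM : ExitsInto (chList G L).Adj ↑(A ∪ B ∪ S) W := by
      rw [hpls]
      exact hG.chList_append
        (fun x hx => List.mem_append_right p (by simpa [dA.mem_iff, dB.mem_iff, ← hlS] using hx))
        (fun x hx hxW => lt_irrefl _ (hW x hx x hxW))
    have hSW : ExitsInto (upArc (chList G L) r) S W := by
      refine ExitsInto.upArc_of_rank_lt (Y := ↑(A ∪ B)) (by rwa [← Finset.coe_union]) ?_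
      intro y hy x hx
      exact hltS y (by simp [dA.mem_iff, dB.mem_iff] at hy ⊢; tauto) x hx
    obtain ⟨hGA, hGB⟩ : ExitsInto G.Adj A ↑(S ∪ W) ∧ ExitsInto G.Adj B ↑(S ∪ W) := by
      push_cast at hG ⊢
      exact hG.sides_of_separated hsep
    have hside : ∀ X T : Finset V, v ∈ T → ExitsInto (upArc (chList G L) r) T ↑(S ∪ W) →
        (T.card : ℝ) ≤ c / (1 - (2/3 : ℝ) ^ α) * (X.card : ℝ) ^ α →
        3 * X.card ≤ 2 * (A ∪ B ∪ S).card → ∃ T : Finset V, v ∈ T ∧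
          ExitsInto (upArc (chList G L) r) T W ∧
          (T.card : ℝ) ≤ c / (1 - (2/3 : ℝ) ^ α) * ((A ∪ B ∪ S).card : ℝ) ^ α := by
      intro X T hvT hT hTcard hX
      refine ⟨S ∪ T, by simp [hvT], ?_, card_union_le_of_three_mul_le hc hα hScard hTcard hX⟩
      push_cast at hT ⊢
      exact hSW.union hT
    rcases Finset.mem_union.1 hv with hvAB | hvS
    rcases Finset.mem_union.1 hvAB with hvA | hvB
    · obtain ⟨T, hvT, hT, hTcard⟩ := ihA (p := p) (s := lB ++ lS ++ s) (by simp [hpls])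
        (fun x hx => hlt x (List.mem_append_left lB hx)) hGA v hvA
      exact hside A T hvT hT hTcard hA
    · obtain ⟨T, hvT, hT, hTcard⟩ := ihB (p := p ++ lA) (s := lS ++ s) (by simp [hpls])
        hlt hGB v hvB
      exact hside B T hvT hT hTcard hB
    · refine ⟨S, hvS, hSW, ?_⟩
      simpa using card_union_le_of_three_mul_le (T := ∅) (m := 0) hc hα hScard
        (by simp [Real.zero_rpow hα.ne']) (Nat.zero_le _)

end NestedDissection

lemma pairwise_rk_lt {n : ℕ} (π : Fin n ≃ V) :
    ((List.finRange n).map π).Pairwise (fun a b => rk π a < rk π b) := by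
  rw [List.pairwise_map]
  refine (List.pairwise_lt_finRange n).imp fun {i j} hij => ?_
  simpa only [rk, Equiv.symm_apply_apply] using Fin.lt_def.mp hij

theorem stmt3_general {V : Type*} [Fintype V] [DecidableEq V] {n : ℕ}
    (G : SimpleGraph V) (π : Fin n ≃ V)
    (α c : ℝ) (hα0 : 0 < α) (hc : 0 < c)
    (hnd : IsNDOrder G c α Finset.univ ((List.finRange n).map ⇑π)) :
    ∀ v : V, (nVertsSS G π v : ℝ) ≤ c / (1 - (2/3 : ℝ) ^ α) * (n : ℝ) ^ α := by
  intro v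
  obtain ⟨T, hvT, hT, hcard⟩ := hnd.exists_exitsInto_upArc (pairwise_rk_lt π) hc.le hα0
    (p := []) (s := []) (W := ∅) (by simp) (by simp) (fun _ _ _ _ => by simp) v
    (Finset.mem_univ v)
  have hreach : {u | UpReach G π v u} ⊆ T := fun u hu =>
    ExitsInto.mem_of_reflTransGen (R := upArc (chGraph G π) (rk π))
      (by simpa [chGraph] using hT) hvT hu
  have hn : (Finset.univ : Finset V).card = n := by
    rw [Finset.card_univ, Fintype.card_congr π.symm, Fintype.card_fin]
  calc (nVertsSS G π v : ℝ) ≤ T.card := by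
        exact_mod_cast (Set.ncard_le_ncard hreach).trans_eq (Set.ncard_coe_finset T)
    _ ≤ _ := hcard
    _ = _ := by rw [hn]

/-- If every induced subgraph of `G` on `k ≥ 1` vertices has a balanced
separator of cardinality at most `c * k ^ α`, and `π` is a nested dissection order of
`G` whose separator at every recursion step on a `k`-vertex subgraph has cardinality
at most `c * k ^ α`, then every search space `SS v` in `G^∧π` has at most
`(c / (1 - (2/3) ^ α)) * n ^ α` vertices. -/
theorem stmt3 {V : Type*} [Fintype V] [DecidableEq V] {n : ℕ}
    (G : SimpleGraph V) (hG : G.Connected) (π : Fin n ≃ V)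
    (α c : ℝ) (hα0 : 0 < α) (hα1 : α < 1) (hc : 0 < c)
    (hsep : ∀ U : Finset V, U.Nonempty →
      ∃ S : Finset V, IsBalancedSepOn G U S ∧ (S.card : ℝ) ≤ c * (U.card : ℝ) ^ α)
    (hnd : IsNDOrder G c α Finset.univ ((List.finRange n).map ⇑π)) :
    ∀ v : V, (nVertsSS G π v : ℝ) ≤ c / (1 - (2/3 : ℝ) ^ α) * (n : ℝ) ^ α :=
  stmt3_general G π α c hα0 hc hnd
end
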